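/- Let A = kQ/I be a graded gentle algebra and e a sum of vertex idempotents. If both A_e and eAe are proper, then A is proper; dually, if both A_e and eAe are homologically smooth, then A is homologically smooth. Combined with the previous characterization, if any two of the three algebras A, eAe, A_e are both homologically smooth and proper, then so is the third. -/

import Mathlib

/-!
Flattening a cycle of arrows of `A_e` (resp. `eAe`) gives a cycle of arrows of `Q` through a
vertex outside (resp. inside) `supp` with relations (resp. no relations) at all its vertices
inside (resp. outside) `supp`; conversely, cutting such a cycle at its vertices outside
(resp. inside) `supp` recovers a cycle of `A_e` (resp. `eAe`). Hence cycles of relations of `A_e`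
and relation-free cycles of `eAe` are cycles of `Q` with relations everywhere, resp. nowhere,
while relation-free cycles of `A_e` and cycles of relations of `eAe` are both cycles of `Q` with
relations exactly at the vertices in `supp`. Each implication is then a case distinction on
whether the cycle meets `supp`, or its complement.
-/

universe w

/-- A graded quiver with a set of quadratic monomial relations: the data `(Q, I)`
presenting a graded quadratic monomial algebra `A = kQ/⟨I⟩` (viewed as a dg algebra
with zero differential).  `rel a b` means that the length-two path `ab` lies in `I`;
`deg` is the grading of the arrows. -/
structure QuadData : Type (w + 1) where
  V : Type w
  E : Type w
  src : E → V
  tgt : E → V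
  deg : E → ℤ
  rel : E → E → Prop
  rel_comp : ∀ a b, rel a b → tgt a = src b

namespace QuadData

variable (Q : QuadData)

/-- A list of arrows is composable (i.e. is a path). -/
def Composable (l : List Q.E) : Prop := l.Chain' fun a b => Q.tgt a = Q.src b

/-- No two consecutive arrows of the path form a relation. -/
def AvoidsRel (l : List Q.E) : Prop := l.Chain' fun a b => ¬ Q.rel a b

/-- All consecutive pairs of arrows of the path are relations. -/
def AllRel (l : List Q.E) : Prop := l.Chain' fun a b => Q.rel a b

end QuadData

namespace QuadData

variable (Q : QuadData)

/-- There is a cyclic path `α₁ ⋯ αₙ` with `αᵢαᵢ₊₁ ∈ I` for all `i ∈ ℤ/nℤ`. -/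
def RelCycle : Prop :=
  ∃ (l : List Q.E) (h : l ≠ []), Q.AllRel l ∧ Q.rel (l.getLast h) (l.head h)

/-- There is a cyclic path `α₁ ⋯ αₙ` with `αᵢαᵢ₊₁ ∉ I` for all `i ∈ ℤ/nℤ`. -/
def RelFreeCycle : Prop :=
  ∃ (l : List Q.E) (h : l ≠ []), Q.Composable l ∧ Q.AvoidsRel l ∧
    Q.tgt (l.getLast h) = Q.src (l.head h) ∧ ¬ Q.rel (l.getLast h) (l.head h)

/-- Combinatorial characterisation of homological smoothness of `kQ/⟨I⟩`:
there is no cyclic path all of whose consecutive pairs are relations. -/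
def SmoothP : Prop := ¬ Q.RelCycle

/-- Combinatorial characterisation of properness of `kQ/⟨I⟩`:
there is no relation-free cyclic path. -/
def ProperP : Prop := ¬ Q.RelFreeCycle

/-- `A = kQ/⟨I⟩` is homologically smooth iff its minimal bimodule resolution, whose
terms are indexed by the paths all of whose consecutive pairs lie in `I`, is finite. -/
def IsSmoothC : Prop := Finite {l : List Q.E // Q.AllRel l}

/-- `A = kQ/⟨I⟩` (with zero differential) is proper iff its total cohomology, i.e.
`A` itself, is finite dimensional over `k`; a basis of `A` is given by the
relation-avoiding paths. -/
def IsProperC : Prop := Finite {l : List Q.E // Q.Composable l ∧ Q.AvoidsRel l}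

/-- The graded quadratic dual `A⁽ᴵ⁾ = kQᵒᵖ/⟨I^⊥⟩`, where
`I^⊥ = {βᵒᵖαᵒᵖ : αβ ∉ I}` and `|αᵒᵖ| = 1 - |α|`. -/
@[reducible] def dual : QuadData where
  V := Q.V
  E := Q.E
  src := Q.tgt
  tgt := Q.src
  deg := fun e => 1 - Q.deg e
  rel := fun x y => Q.tgt y = Q.src x ∧ ¬ Q.rel y x
  rel_comp := fun _ _ h => h.1.symm

/-- An arrow of the quiver of `A_e` (for `supp` the support of the idempotent `e`):
a path `α₁ ⋯ αₛ` all of whose consecutive pairs are relations passing through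
vertices of `supp`, with endpoints outside `supp`. -/
structure CutArrow (supp : Set Q.V) where
  letters : List Q.E
  ne : letters ≠ []
  chain : letters.Chain' fun a b => Q.rel a b ∧ Q.src b ∈ supp
  src_out : Q.src (letters.head ne) ∉ supp
  tgt_out : Q.tgt (letters.getLast ne) ∉ supp

/-- The graded quadratic monomial algebra `A_e` obtained by collapsing the relations
through the vertices in `supp`: vertices `Q₀ ∖ supp`, arrows `[α₁ ⋯ αₛ]` of degree
`Σ|αᵢ| - s + 1`, and relations `[α₁ ⋯ αₛ][β₁ ⋯ βₜ]` whenever `αₛβ₁ ∈ I`. -/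
@[reducible] def cut (supp : Set Q.V) : QuadData where
  V := {v : Q.V // v ∉ supp}
  E := Q.CutArrow supp
  src := fun p => ⟨Q.src (p.letters.head p.ne), p.src_out⟩
  tgt := fun p => ⟨Q.tgt (p.letters.getLast p.ne), p.tgt_out⟩
  deg := fun p => ((p.letters.map Q.deg).sum - p.letters.length) + 1
  rel := fun p q => Q.rel (p.letters.getLast p.ne) (q.letters.head q.ne)
  rel_comp := fun _ _ h => Subtype.ext (Q.rel_comp _ _ h)

/-- An arrow of the presentation of the idempotent subalgebra `eAe`:
a relation-avoiding path with endpoints in `supp` and interior outside `supp`. -/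
structure IdemArrow (supp : Set Q.V) where
  letters : List Q.E
  ne : letters ≠ []
  chain : letters.Chain' fun a b => Q.tgt a = Q.src b ∧ ¬ Q.rel a b ∧ Q.src b ∉ supp
  src_in : Q.src (letters.head ne) ∈ supp
  tgt_in : Q.tgt (letters.getLast ne) ∈ supp

/-- The idempotent subalgebra `eAe` as a graded quadratic monomial algebra. -/
@[reducible] def idem (supp : Set Q.V) : QuadData where
  V := {v : Q.V // v ∈ supp}
  E := Q.IdemArrow supp
  src := fun p => ⟨Q.src (p.letters.head p.ne), p.src_in⟩
  tgt := fun p => ⟨Q.tgt (p.letters.getLast p.ne), p.tgt_in⟩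
  deg := fun p => (p.letters.map Q.deg).sum
  rel := fun p q => Q.rel (p.letters.getLast p.ne) (q.letters.head q.ne)
  rel_comp := fun _ _ h => Subtype.ext (Q.rel_comp _ _ h)

/-- An isomorphism of presentations of graded quadratic monomial algebras: it
induces an isomorphism of the associated dg algebras (with zero differential). -/
structure Iso (Q₁ Q₂ : QuadData) where
  vEquiv : Q₁.V ≃ Q₂.V
  eEquiv : Q₁.E ≃ Q₂.E
  map_src : ∀ e, Q₂.src (eEquiv e) = vEquiv (Q₁.src e)
  map_tgt : ∀ e, Q₂.tgt (eEquiv e) = vEquiv (Q₁.tgt e)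
  map_deg : ∀ e, Q₂.deg (eEquiv e) = Q₁.deg e
  map_rel : ∀ a b, Q₁.rel a b ↔ Q₂.rel (eEquiv a) (eEquiv b)

/-- The conditions for `(Q, I)` to present a (graded) gentle algebra. -/
structure IsGentle (Q : QuadData) : Prop where
  finV : Finite Q.V
  finE : Finite Q.E
  src_two : ∀ a b c : Q.E, Q.src a = Q.src b → Q.src b = Q.src c → a = b ∨ b = c ∨ a = c
  tgt_two : ∀ a b c : Q.E, Q.tgt a = Q.tgt b → Q.tgt b = Q.tgt c → a = b ∨ b = c ∨ a = c
  rel_right : ∀ a b b', Q.rel a b → Q.rel a b' → b = b'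
  rel_left : ∀ a a' b, Q.rel a b → Q.rel a' b → a = a'
  nonrel_right : ∀ a b b', Q.tgt a = Q.src b → Q.tgt a = Q.src b' →
    ¬ Q.rel a b → ¬ Q.rel a b' → b = b'
  nonrel_left : ∀ a a' b, Q.tgt a = Q.src b → Q.tgt a' = Q.src b →
    ¬ Q.rel a b → ¬ Q.rel a' b → a = a'

end QuadData

namespace List

variable {α : Type*} {S : Set α} {R R' : α → α → Prop} {b c l : List α}

theorem IsChain.and (h₁ : l.IsChain R) (h₂ : l.IsChain R') :
    l.IsChain fun x y => R x y ∧ R' x y := by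
  induction h₁ with
  | nil => exact .nil
  | singleton a => exact .singleton a
  | cons_cons hr _ ih =>
    rw [isChain_cons_cons] at h₂
    exact .cons_cons ⟨hr, h₂.1⟩ (ih h₂.2)

def Linked (R : α → α → Prop) (b c : List α) : Prop :=
  ∀ x ∈ b.getLast?, ∀ y ∈ c.head?, R x y

theorem linked_iff (hb : b ≠ []) (hc : c ≠ []) :
    Linked R b c ↔ R (b.getLast hb) (c.head hc) := by
  simp [Linked, getLast?_eq_some_getLast hb, head?_eq_some_head hc]

def IsBlock (S : Set α) (R : α → α → Prop) (b : List α) : Prop :=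
  (∃ x ∈ b.head?, x ∈ S) ∧ b.IsChain fun x y => R x y ∧ y ∉ S

theorem IsBlock.ne_nil (hb : b.IsBlock S R) : b ≠ [] := by
  rintro rfl
  simp [IsBlock] at hb

theorem IsBlock.head_mem (hb : b.IsBlock S R) : b.head hb.ne_nil ∈ S := by
  obtain ⟨x, hx, hxS⟩ := hb.1
  rw [head?_eq_some_head hb.ne_nil, Option.mem_some_iff] at hx
  exact hx ▸ hxS

end List

namespace Cycle

variable {α β : Type*} {R R' : α → α → Prop}

theorem chain_coe_iff_isChain_append_self {l : List α} :
    Chain R (l : Cycle α) ↔ (l ++ l).IsChain R := by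
  cases l with
  | nil => simp
  | cons a t =>
    rw [chain_coe_cons, ← List.cons_append, List.isChain_append, List.isChain_append]
    simp

theorem exists_isChain_iff_exists_chain :
    (∃ (l : List α) (h : l ≠ []), l.IsChain R ∧ R (l.getLast h) (l.head h)) ↔
      ∃ c : Cycle α, c ≠ nil ∧ c.Chain R := by
  constructor
  · rintro ⟨l, hl, hch, hR⟩
    exact ⟨l, by simpa using hl, (chain_ne_nil R hl).2 (hch.cons_of_ne_nil hl hR)⟩
  · rintro ⟨c, hc, hch⟩
    induction c using Quotient.inductionOn with | h l => ?_
    have hl : l ≠ [] := by simpa using hc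
    have := (chain_ne_nil R hl).1 hch
    rw [List.isChain_cons] at this
    exact ⟨l, hl, this.2, this.1 _ (List.head?_eq_some_head hl)⟩

theorem exists_mem_of_ne_nil {c : Cycle α} (hc : c ≠ nil) : ∃ a, a ∈ c := by
  induction c using Quotient.inductionOn with | h l => ?_
  exact (List.exists_mem_of_ne_nil l (by simpa using hc)).imp fun _ => mem_coe_iff.2

theorem ne_nil_of_mem {c : Cycle α} {a : α} (ha : a ∈ c) : c ≠ nil := by
  rintro rfl
  exact notMem_nil a ha

theorem chain_iff_of_mem {c : Cycle α} (H : ∀ a ∈ c, ∀ b ∈ c, R a b ↔ R' a b) :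
    c.Chain R ↔ c.Chain R' := by
  induction c using Quotient.inductionOn with | h l => ?_
  simp only [mk''_eq_coe, chain_coe_iff_isChain_append_self]
  exact List.IsChain.iff_of_mem_imp fun a b ha hb =>
    H a (by simpa using ha) b (by simpa using hb)

theorem Chain.exists_rel_of_mem {c : Cycle α} (h : c.Chain R) {a : α} (ha : a ∈ c) :
    ∃ b ∈ c, R a b := by
  induction c using Quotient.inductionOn with | h l => ?_
  obtain ⟨s, t, rfl⟩ := List.append_of_mem (mem_coe_iff.1 ha)
  have hrot : ((s ++ a :: t : List α) : Cycle α) = (a :: (t ++ s) : List α) :=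
    coe_eq_coe.2 List.isRotated_append
  simp only [mk''_eq_coe, hrot, chain_coe_cons] at h ⊢
  obtain ⟨b, l', hb⟩ := List.exists_cons_of_ne_nil (by simp : t ++ s ++ [a] ≠ [])
  rw [hb, List.isChain_cons_cons] at h
  have hbm : b ∈ t ++ s ++ [a] := hb ▸ List.mem_cons_self
  exact ⟨b, by simp at hbm ⊢; tauto, h.1⟩

theorem chain_coe_flatten {bs : List (List α)} (hbs : [] ∉ bs) :
    Chain R (bs.flatten : Cycle α) ↔ (∀ b ∈ bs, b.IsChain R) ∧
      Chain (List.Linked R) (bs : Cycle (List α)) := by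
  rw [chain_coe_iff_isChain_append_self, chain_coe_iff_isChain_append_self, ← List.flatten_append,
    List.isChain_flatten (by simpa using hbs)]
  simp only [List.mem_append, or_self]
  rfl

theorem exists_chain_comap_iff (f : β → α) :
    (∃ c : Cycle β, c ≠ nil ∧ c.Chain fun p q => R (f p) (f q)) ↔
      ∃ c : Cycle α, c ≠ nil ∧ c.Chain R ∧ ∀ a ∈ c, a ∈ Set.range f := by
  constructor
  · rintro ⟨c, hc, hch⟩
    refine ⟨c.map f, by simpa using hc, (chain_map f).2 hch, fun a ha => ?_⟩
    obtain ⟨b, -, rfl⟩ := mem_map.1 ha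
    exact ⟨b, rfl⟩
  · rintro ⟨c, hc, hch, hrange⟩
    induction c using Quotient.inductionOn with | h l => ?_
    obtain ⟨l', rfl⟩ : l ∈ Set.range (List.map f) :=
      Set.range_list_map f ▸ fun a ha => hrange a (mem_coe_iff.2 ha)
    refine ⟨l', by simpa using hc, (chain_map f).1 ?_⟩
    simpa using hch

theorem exists_flatten_eq_of_mem (S : Set α) {c : Cycle α} {a : α} (ha : a ∈ c)
    (haS : a ∈ S) :
    ∃ bs : List (List α), (bs.flatten : Cycle α) = c ∧
      ∀ b ∈ bs, (∃ x ∈ b.head?, x ∈ S) ∧ b.IsChain fun _ y => y ∉ S := by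
  classical
  induction c using Quotient.inductionOn with | h l => ?_
  obtain ⟨s, t, rfl⟩ := List.append_of_mem (mem_coe_iff.1 ha)
  set bs := (a :: (t ++ s)).splitBy fun _ y => !decide (y ∈ S)
  have hheads : ∀ b ∈ bs, ∃ x ∈ b.head?, x ∈ S := by
    refine (List.isChain_getLast_head_splitBy _ _).induction _ _ ?_ ?_
    · rintro b c ⟨-, hc, hS⟩ -
      exact ⟨c.head hc, List.head?_eq_some_head hc, by simpa using hS⟩
    · intro hne
      refine ⟨a, ?_, haS⟩
      rw [List.head?_eq_some_head (List.ne_nil_of_mem_splitBy (List.head_mem hne))]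
      exact congrArg some (List.head_head_splitBy _ (List.cons_ne_nil _ _))
  refine ⟨bs, ?_, fun b hb => ⟨hheads b hb, by simpa using List.isChain_of_mem_splitBy hb⟩⟩
  rw [List.flatten_splitBy]
  exact coe_eq_coe.2 (List.isRotated_append (l := s) (l' := a :: t)).symm

end Cycle

section Seam

variable {α : Type*} {S : Set α} {R Rin Rout : α → α → Prop}

/-- The relation between consecutive letters of a concatenation of blocks starting in `S`:
`Rout` across the seam where a new block starts, `Rin` inside a block. -/
def seamRel (S : Set α) (Rin Rout : α → α → Prop) (x y : α) : Prop :=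
  (y ∈ S → Rout x y) ∧ (y ∉ S → Rin x y)

@[simp]
theorem seamRel_self : seamRel S R R = R := by
  ext x y
  exact Classical.imp_and_neg_imp_iff _

theorem seamRel_compl : seamRel Sᶜ Rin Rout = seamRel S Rout Rin := by
  ext x y
  simp only [seamRel, Set.mem_compl_iff, not_not, and_comm]

theorem Cycle.chain_seamRel_iff_of_forall_mem {c : Cycle α} (h : ∀ a ∈ c, a ∈ S) :
    c.Chain (seamRel S Rin Rout) ↔ c.Chain Rout :=
  Cycle.chain_iff_of_mem fun _ _ b hb => by simp [seamRel, h b hb]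

theorem Cycle.chain_seamRel_iff_of_forall_notMem {c : Cycle α} (h : ∀ a ∈ c, a ∉ S) :
    c.Chain (seamRel S Rin Rout) ↔ c.Chain Rin := by
  rw [← seamRel_compl]
  exact Cycle.chain_seamRel_iff_of_forall_mem h

theorem List.linked_seamRel_iff {b c : List α} (hc : ∃ y ∈ c.head?, y ∈ S) :
    Linked (seamRel S Rin Rout) b c ↔ Linked Rout b c := by
  obtain ⟨y, hy, hyS⟩ := hc
  simp [Linked, Option.mem_def.1 hy, seamRel, hyS]

theorem exists_chain_seamRel_iff (S : Set α) (Rin Rout : α → α → Prop) :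
    (∃ c : Cycle α, c.Chain (seamRel S Rin Rout) ∧ ∃ a ∈ c, a ∈ S) ↔
      ∃ d : Cycle (List α), d ≠ Cycle.nil ∧ (∀ b ∈ d, b.IsBlock S Rin) ∧
        d.Chain (List.Linked Rout) := by
  constructor
  · rintro ⟨c, hc, a, ha, haS⟩
    obtain ⟨bs, rfl, hbs⟩ := Cycle.exists_flatten_eq_of_mem S ha haS
    have hnil : [] ∉ bs := fun h => by simpa using (hbs [] h).1
    rw [Cycle.chain_coe_flatten hnil] at hc
    refine ⟨bs, ?_, fun b hb => ⟨(hbs b hb).1, ?_⟩, ?_⟩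
    · exact fun h => by simp_all
    · exact ((hc.1 b hb).and (hbs b hb).2).imp fun x y h => ⟨h.1.2 h.2, h.2⟩
    · exact (Cycle.chain_iff_of_mem fun b _ c hc =>
        List.linked_seamRel_iff (hbs c (Cycle.mem_coe_iff.1 hc)).1).1 hc.2
  · rintro ⟨d, hd, hblk, hch⟩
    induction d using Quotient.inductionOn with | h bs => ?_
    simp only [Cycle.mk''_eq_coe, Cycle.mem_coe_iff] at hd hblk hch
    have hnil : [] ∉ bs := fun h => (hblk [] h).ne_nil rfl
    refine ⟨bs.flatten, (Cycle.chain_coe_flatten hnil).2 ⟨fun b hb => ?_, ?_⟩, ?_⟩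
    · exact (hblk b hb).2.imp fun x y h => ⟨fun hy => absurd hy h.2, fun _ => h.1⟩
    · exact (Cycle.chain_iff_of_mem fun b _ c hc =>
        List.linked_seamRel_iff (hblk c (Cycle.mem_coe_iff.1 hc)).1).2 hch
    · obtain ⟨b, bs', rfl⟩ := List.exists_cons_of_ne_nil (by simpa using hd)
      have hb := hblk b List.mem_cons_self
      refine ⟨b.head hb.ne_nil, Cycle.mem_coe_iff.2 ?_, hb.head_mem⟩
      exact List.mem_flatten.2 ⟨b, List.mem_cons_self, List.head_mem _⟩

end Seam

namespace QuadData

def Free (Q : QuadData) (x y : Q.E) : Prop :=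
  Q.tgt x = Q.src y ∧ ¬ Q.rel x y

variable {Q : QuadData} {supp : Set Q.V}

theorem relCycle_iff_exists_cycle :
    Q.RelCycle ↔ ∃ c : Cycle Q.E, c ≠ Cycle.nil ∧ c.Chain Q.rel :=
  Cycle.exists_isChain_iff_exists_chain

theorem relFreeCycle_iff_exists_cycle :
    Q.RelFreeCycle ↔ ∃ c : Cycle Q.E, c ≠ Cycle.nil ∧ c.Chain Q.Free := by
  rw [← Cycle.exists_isChain_iff_exists_chain]
  refine exists_congr fun l => exists_congr fun hl => ⟨?_, ?_⟩
  · rintro ⟨hcomp, havoid, htgt, hrel⟩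
    exact ⟨List.IsChain.and hcomp havoid, htgt, hrel⟩
  · rintro ⟨hch, htgt, hrel⟩
    exact ⟨hch.imp fun _ _ h => h.1, hch.imp fun _ _ h => h.2, htgt, hrel⟩

/-- Arrows of `A_e` (`T = suppᶜ`) and of `eAe` (`T = supp`) are blocks of letters cut at the
`T`-vertices; the condition that a block also ends at a `T`-vertex is automatic in a cycle,
since the next block starts there. -/
theorem exists_cycle_arrows_iff {β : Type*} (letters : β → List Q.E) {T : Set Q.V}
    {Rin Rout : Q.E → Q.E → Prop} {r : β → β → Prop}
    (hr : ∀ p q, r p q ↔ (letters p).Linked Rout (letters q))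
    (hRout : ∀ x y, Rout x y → Q.tgt x = Q.src y)
    (hblock : ∀ p, (letters p).IsBlock (Q.src ⁻¹' T) Rin)
    (hmk : ∀ b, b.IsBlock (Q.src ⁻¹' T) Rin → (∀ h, Q.tgt (b.getLast h) ∈ T) →
      ∃ p, letters p = b) :
    (∃ c : Cycle β, c ≠ Cycle.nil ∧ c.Chain r) ↔
      ∃ c : Cycle Q.E, c.Chain (seamRel (Q.src ⁻¹' T) Rin Rout) ∧
        ∃ a ∈ c, Q.src a ∈ T := by
  obtain rfl : r = fun p q => (letters p).Linked Rout (letters q) :=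
    funext₂ fun p q => propext (hr p q)
  rw [Cycle.exists_chain_comap_iff letters]
  refine Iff.trans ?_ (exists_chain_seamRel_iff (Q.src ⁻¹' T) Rin Rout).symm
  refine exists_congr fun d => ⟨?_, ?_⟩
  · rintro ⟨hd, hch, hrange⟩
    refine ⟨hd, fun b hb => ?_, hch⟩
    obtain ⟨p, rfl⟩ := hrange b hb
    exact hblock p
  · rintro ⟨hd, hblk, hch⟩
    refine ⟨hd, hch, fun b hb => hmk b (hblk b hb) fun h => ?_⟩
    obtain ⟨c, hc, hbc⟩ := hch.exists_rel_of_mem hb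
    obtain ⟨y, hy, hyT⟩ := (hblk c hc).1
    rw [hRout _ _ (hbc _ (List.getLast?_eq_some_getLast h) y hy)]
    exact hyT

theorem CutArrow.isBlock (p : Q.CutArrow supp) : p.letters.IsBlock (Q.src ⁻¹' suppᶜ) Q.rel :=
  ⟨⟨_, List.head?_eq_some_head p.ne, p.src_out⟩,
    p.chain.imp fun _ _ h => ⟨h.1, not_not.2 h.2⟩⟩

theorem CutArrow.exists_letters_eq {b : List Q.E} (hb : b.IsBlock (Q.src ⁻¹' suppᶜ) Q.rel)
    (htgt : ∀ h, Q.tgt (b.getLast h) ∈ suppᶜ) : ∃ p : Q.CutArrow supp, p.letters = b :=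
  ⟨⟨b, hb.ne_nil, hb.2.imp fun _ _ h => ⟨h.1, not_not.1 h.2⟩, hb.head_mem, htgt _⟩, rfl⟩

theorem IdemArrow.isBlock (p : Q.IdemArrow supp) : p.letters.IsBlock (Q.src ⁻¹' supp) Q.Free :=
  ⟨⟨_, List.head?_eq_some_head p.ne, p.src_in⟩,
    p.chain.imp fun _ _ h => ⟨⟨h.1, h.2.1⟩, h.2.2⟩⟩

theorem IdemArrow.exists_letters_eq {b : List Q.E} (hb : b.IsBlock (Q.src ⁻¹' supp) Q.Free)
    (htgt : ∀ h, Q.tgt (b.getLast h) ∈ supp) : ∃ p : Q.IdemArrow supp, p.letters = b :=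
  ⟨⟨b, hb.ne_nil, hb.2.imp fun _ _ h => ⟨h.1.1, h.1.2, h.2⟩, hb.head_mem, htgt _⟩, rfl⟩

theorem cut_relCycle_iff : (Q.cut supp).RelCycle ↔
    ∃ c : Cycle Q.E, c.Chain Q.rel ∧ ∃ a ∈ c, Q.src a ∉ supp := by
  rw [relCycle_iff_exists_cycle, exists_cycle_arrows_iff CutArrow.letters
    (fun p q => (List.linked_iff p.ne q.ne).symm) Q.rel_comp CutArrow.isBlock
    fun _ hb ht => CutArrow.exists_letters_eq hb ht, seamRel_self]
  rfl

theorem cut_relFreeCycle_iff : (Q.cut supp).RelFreeCycle ↔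
    ∃ c : Cycle Q.E, c.Chain (seamRel (Q.src ⁻¹' supp) Q.Free Q.rel) ∧
      ∃ a ∈ c, Q.src a ∉ supp := by
  rw [relFreeCycle_iff_exists_cycle, exists_cycle_arrows_iff CutArrow.letters (Rout := Q.Free)
    (fun p q => by rw [List.linked_iff p.ne q.ne]; exact Subtype.ext_iff.and Iff.rfl)
    (fun _ _ h => h.1) CutArrow.isBlock fun _ hb ht => CutArrow.exists_letters_eq hb ht,
    Set.preimage_compl, seamRel_compl]
  rfl

theorem idem_relCycle_iff : (Q.idem supp).RelCycle ↔
    ∃ c : Cycle Q.E, c.Chain (seamRel (Q.src ⁻¹' supp) Q.Free Q.rel) ∧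
      ∃ a ∈ c, Q.src a ∈ supp :=
  relCycle_iff_exists_cycle.trans <| exists_cycle_arrows_iff IdemArrow.letters
    (fun p q => (List.linked_iff p.ne q.ne).symm) Q.rel_comp IdemArrow.isBlock
    fun _ hb ht => IdemArrow.exists_letters_eq hb ht

theorem idem_relFreeCycle_iff : (Q.idem supp).RelFreeCycle ↔
    ∃ c : Cycle Q.E, c.Chain Q.Free ∧ ∃ a ∈ c, Q.src a ∈ supp := by
  rw [relFreeCycle_iff_exists_cycle, exists_cycle_arrows_iff IdemArrow.letters (Rout := Q.Free)
    (fun p q => by rw [List.linked_iff p.ne q.ne]; exact Subtype.ext_iff.and Iff.rfl)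
    (fun _ _ h => h.1) IdemArrow.isBlock fun _ hb ht => IdemArrow.exists_letters_eq hb ht,
    seamRel_self]

theorem relCycle_cut_or_idem (h : Q.RelCycle) :
    (Q.cut supp).RelCycle ∨ (Q.idem supp).RelCycle := by
  obtain ⟨c, hne, hc⟩ := relCycle_iff_exists_cycle.1 h
  by_cases hout : ∃ a ∈ c, Q.src a ∉ supp
  · exact .inl (cut_relCycle_iff.2 ⟨c, hc, hout⟩)
  · push Not at hout
    obtain ⟨a, ha⟩ := Cycle.exists_mem_of_ne_nil hne
    exact .inr (idem_relCycle_iff.2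
      ⟨c, (Cycle.chain_seamRel_iff_of_forall_mem hout).2 hc, a, ha, hout a ha⟩)

theorem relFreeCycle_cut_or_idem (h : Q.RelFreeCycle) :
    (Q.cut supp).RelFreeCycle ∨ (Q.idem supp).RelFreeCycle := by
  obtain ⟨c, hne, hc⟩ := relFreeCycle_iff_exists_cycle.1 h
  by_cases hin : ∃ a ∈ c, Q.src a ∈ supp
  · exact .inr (idem_relFreeCycle_iff.2 ⟨c, hc, hin⟩)
  · push Not at hin
    obtain ⟨a, ha⟩ := Cycle.exists_mem_of_ne_nil hne
    exact .inl (cut_relFreeCycle_iff.2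
      ⟨c, (Cycle.chain_seamRel_iff_of_forall_notMem hin).2 hc, a, ha, hin a ha⟩)

theorem relCycle_of_cut (h : (Q.cut supp).RelCycle) : Q.RelCycle := by
  obtain ⟨c, hc, a, ha, -⟩ := cut_relCycle_iff.1 h
  exact relCycle_iff_exists_cycle.2 ⟨c, Cycle.ne_nil_of_mem ha, hc⟩

theorem relFreeCycle_of_idem (h : (Q.idem supp).RelFreeCycle) : Q.RelFreeCycle := by
  obtain ⟨c, hc, a, ha, -⟩ := idem_relFreeCycle_iff.1 h
  exact relFreeCycle_iff_exists_cycle.2 ⟨c, Cycle.ne_nil_of_mem ha, hc⟩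

theorem relFreeCycle_or_idem_of_cut (h : (Q.cut supp).RelFreeCycle) :
    Q.RelFreeCycle ∨ (Q.idem supp).RelCycle := by
  obtain ⟨c, hc, a, ha, -⟩ := cut_relFreeCycle_iff.1 h
  by_cases hin : ∃ a ∈ c, Q.src a ∈ supp
  · exact .inr (idem_relCycle_iff.2 ⟨c, hc, hin⟩)
  · push Not at hin
    exact .inl (relFreeCycle_iff_exists_cycle.2
      ⟨c, Cycle.ne_nil_of_mem ha, (Cycle.chain_seamRel_iff_of_forall_notMem hin).1 hc⟩)

theorem relCycle_or_cut_of_idem (h : (Q.idem supp).RelCycle) :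
    Q.RelCycle ∨ (Q.cut supp).RelFreeCycle := by
  obtain ⟨c, hc, a, ha, -⟩ := idem_relCycle_iff.1 h
  by_cases hout : ∃ a ∈ c, Q.src a ∉ supp
  · exact .inr (cut_relFreeCycle_iff.2 ⟨c, hc, hout⟩)
  · push Not at hout
    exact .inl (relCycle_iff_exists_cycle.2
      ⟨c, Cycle.ne_nil_of_mem ha, (Cycle.chain_seamRel_iff_of_forall_mem hout).1 hc⟩)

end QuadData

theorem two_out_of_three_smooth_proper_general (Q : QuadData) (supp : Set Q.V) :
    ((Q.cut supp).ProperP → (Q.idem supp).ProperP → Q.ProperP) ∧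
    ((Q.cut supp).SmoothP → (Q.idem supp).SmoothP → Q.SmoothP) ∧
    ((Q.SmoothP ∧ Q.ProperP) → ((Q.idem supp).SmoothP ∧ (Q.idem supp).ProperP) →
      ((Q.cut supp).SmoothP ∧ (Q.cut supp).ProperP)) ∧
    ((Q.SmoothP ∧ Q.ProperP) → ((Q.cut supp).SmoothP ∧ (Q.cut supp).ProperP) →
      ((Q.idem supp).SmoothP ∧ (Q.idem supp).ProperP)) ∧
    (((Q.idem supp).SmoothP ∧ (Q.idem supp).ProperP) →
      ((Q.cut supp).SmoothP ∧ (Q.cut supp).ProperP) → (Q.SmoothP ∧ Q.ProperP)) := by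
  have proper : (Q.cut supp).ProperP → (Q.idem supp).ProperP → Q.ProperP :=
    fun hc hi h => (QuadData.relFreeCycle_cut_or_idem h).elim hc hi
  have smooth : (Q.cut supp).SmoothP → (Q.idem supp).SmoothP → Q.SmoothP :=
    fun hc hi h => (QuadData.relCycle_cut_or_idem h).elim hc hi
  refine ⟨proper, smooth, ?_, ?_, fun hi hc => ⟨smooth hc.1 hi.1, proper hc.2 hi.2⟩⟩
  · rintro ⟨hs, hp⟩ ⟨his, -⟩
    exact ⟨fun h => hs (QuadData.relCycle_of_cut h),
      fun h => (QuadData.relFreeCycle_or_idem_of_cut h).elim hp his⟩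
  · rintro ⟨hs, hp⟩ ⟨-, hcp⟩
    exact ⟨fun h => (QuadData.relCycle_or_cut_of_idem h).elim hs hcp,
      fun h => hp (QuadData.relFreeCycle_of_idem h)⟩

/-- Let `A = kQ/I` be a graded gentle algebra and `e` a sum of
vertex idempotents with support `supp`.  If both `A_e` and `eAe` are proper then so
is `A`; dually for homological smoothness.  Combined with the characterisation of
Statement 10, if any two of `A`, `eAe`, `A_e` are both homologically smooth and
proper then so is the third. -/
theorem two_out_of_three_smooth_proper (Q : QuadData) (hg : Q.IsGentle)
    (supp : Set Q.V) :
    ((Q.cut supp).ProperP → (Q.idem supp).ProperP → Q.ProperP) ∧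
    ((Q.cut supp).SmoothP → (Q.idem supp).SmoothP → Q.SmoothP) ∧
    ((Q.SmoothP ∧ Q.ProperP) → ((Q.idem supp).SmoothP ∧ (Q.idem supp).ProperP) →
      ((Q.cut supp).SmoothP ∧ (Q.cut supp).ProperP)) ∧
    ((Q.SmoothP ∧ Q.ProperP) → ((Q.cut supp).SmoothP ∧ (Q.cut supp).ProperP) →
      ((Q.idem supp).SmoothP ∧ (Q.idem supp).ProperP)) ∧
    (((Q.idem supp).SmoothP ∧ (Q.idem supp).ProperP) →
      ((Q.cut supp).SmoothP ∧ (Q.cut supp).ProperP) → (Q.SmoothP ∧ Q.ProperP)) :=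
  two_out_of_three_smooth_proper_general Q supp
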